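/- arXiv:1205.2904 — 7 statements merged into one kernel-verified Lean document; each statement's English description precedes it below -/
import Mathlib

section
/- Let T be an odd positive integer, τ ∈ ℂ with Im τ > 0, v ∈ ℂ, and u ∈ ℂ with u ∉ (1/T)ℤ + τℤ. Then A_T(u,v;τ) = Σ_{t=0}^{T−1} e^{2πiut}·A(Tu, v + tτ + (T−1)/2; Tτ). -/
/-!
Put `y = e^{2πi(u+nτ)}`. The `n`-th term of `A_T(u,v;τ)` has denominator `1 - y`, and
`1/(1 - y) = (∑_{t<T} y^t)/(1 - y^T)`, where `y^T ≠ 1` is exactly the condition on `u`.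
The `t`-th piece is the `n`-th term of `e^{2πiut} A(Tu, v + tτ + (T-1)/2; Tτ)`, whose denominator
is `1 - y^T`: `y^t = e^{2πiut} e^{2πintτ}` comes from the prefactor and the shift `tτ` of `v`, and
the shift `(T-1)/2` contributes `e^{πin(T-1)} = (-1)^{n(T-1)}`, turning the sign `(-1)^n` into
`(-1)^{Tn}`. Since `Im τ > 0` all series over `n` converge absolutely, so the finite sum over `t`
commutes with them.
-/

open Complex Real

/-- The Appell–Lerch sum `A(u,v;τ)`. -/
noncomputable def appell (u v τ : ℂ) : ℂ :=
  Complex.exp (π * I * u) *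
    ∑' n : ℤ, (-1 : ℂ) ^ n * Complex.exp (π * I * ((n : ℂ) ^ 2 + n) * τ + 2 * π * I * n * v) /
      (1 - Complex.exp (2 * π * I * n * τ + 2 * π * I * u))

/-- The higher-level Appell–Lerch sum `A_T(u,v;τ)`. -/
noncomputable def appellT (T : ℕ) (u v τ : ℂ) : ℂ :=
  Complex.exp (π * I * u * T) *
    ∑' n : ℤ, (-1 : ℂ) ^ ((T : ℤ) * n) *
        Complex.exp (π * I * T * n * ((n : ℂ) + 1) * τ + 2 * π * I * n * v) /
      (1 - Complex.exp (2 * π * I * u) * Complex.exp (2 * π * I * n * τ))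

open Filter

noncomputable def appellTerm (u v τ : ℂ) (n : ℤ) : ℂ :=
  (-1 : ℂ) ^ n * cexp (π * I * ((n : ℂ) ^ 2 + n) * τ + 2 * π * I * n * v) /
    (1 - cexp (2 * π * I * n * τ + 2 * π * I * u))

noncomputable def appellTTerm (T : ℕ) (u v τ : ℂ) (n : ℤ) : ℂ :=
  (-1 : ℂ) ^ ((T : ℤ) * n) * cexp (π * I * T * n * ((n : ℂ) + 1) * τ + 2 * π * I * n * v) /
    (1 - cexp (2 * π * I * u) * cexp (2 * π * I * n * τ))

lemma appell_eq_mul_tsum (u v τ : ℂ) :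
    appell u v τ = cexp (π * I * u) * ∑' n : ℤ, appellTerm u v τ n := rfl

lemma appellT_eq_mul_tsum (T : ℕ) (u v τ : ℂ) :
    appellT T u v τ = cexp (π * I * u * T) * ∑' n : ℤ, appellTTerm T u v τ n := rfl

lemma eventually_half_le_norm_one_sub_exp {τ : ℂ} (hτ : 0 < τ.im) (s : ℂ) :
    ∀ᶠ n : ℤ in cofinite, 1 / 2 ≤ ‖1 - cexp (2 * π * I * n * τ + s)‖ := by
  have hnorm (n : ℤ) : ‖cexp (2 * π * I * n * τ + s)‖ = rexp (s.re - 2 * π * τ.im * n) := by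
    have h : 2 * π * I * n * τ = ((2 * π * n : ℝ) : ℂ) * (τ * I) := by push_cast; ring
    rw [norm_exp, add_re, h, re_ofReal_mul, mul_I_re]
    ring_nf
  have hlin : Tendsto (fun n : ℤ => 2 * π * τ.im * n) atTop atTop :=
    tendsto_intCast_atTop_atTop.const_mul_atTop (by positivity)
  have hlin' : Tendsto (fun n : ℤ => 2 * π * τ.im * n) atBot atBot :=
    (tendsto_intCast_atBot_iff.mpr tendsto_id).const_mul_atBot (by positivity)
  rw [Int.cofinite_eq, eventually_sup]
  constructor
  · have hexp : Tendsto (fun n : ℤ => rexp (s.re - 2 * π * τ.im * n)) atBot atTop :=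
      tendsto_exp_atTop.comp (tendsto_atTop_add_const_left _ _ (tendsto_neg_atBot_atTop.comp hlin'))
    filter_upwards [hexp.eventually_ge_atTop (3 / 2)] with n hn
    have := abs_norm_sub_norm_le (1 : ℂ) (cexp (2 * π * I * n * τ + s))
    rw [norm_one, hnorm] at this
    linarith [neg_abs_le (1 - rexp (s.re - 2 * π * τ.im * n))]
  · have hexp : Tendsto (fun n : ℤ => rexp (s.re - 2 * π * τ.im * n)) atTop (nhds 0) :=
      tendsto_exp_atBot.comp (tendsto_atBot_add_const_left _ _ (tendsto_neg_atTop_atBot.comp hlin))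
    filter_upwards [hexp.eventually (gt_mem_nhds (by norm_num : (0 : ℝ) < 1 / 2))] with n hn
    have := abs_norm_sub_norm_le (1 : ℂ) (cexp (2 * π * I * n * τ + s))
    rw [norm_one, hnorm] at this
    linarith [le_abs_self (1 - rexp (s.re - 2 * π * τ.im * n))]

lemma norm_appellTerm_numerator (v τ : ℂ) (n : ℤ) :
    ‖(-1 : ℂ) ^ n * cexp (π * I * ((n : ℂ) ^ 2 + n) * τ + 2 * π * I * n * v)‖ =
      ‖jacobiTheta₂_term n (v + τ / 2) τ‖ := by
  rw [norm_mul, norm_zpow, norm_neg, norm_one, one_zpow, one_mul, jacobiTheta₂_term]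
  congr 2
  ring

lemma summable_appellTerm (u v : ℂ) {τ : ℂ} (hτ : 0 < τ.im) : Summable (appellTerm u v τ) := by
  refine .of_norm_bounded_eventually (g := fun n : ℤ => 2 * ‖jacobiTheta₂_term n (v + τ / 2) τ‖)
    ((summable_norm_iff.mpr ((summable_jacobiTheta₂_term_iff _ _).mpr hτ)).mul_left 2) ?_
  filter_upwards [eventually_half_le_norm_one_sub_exp hτ (2 * π * I * u)] with n hn
  rw [appellTerm, norm_div, norm_appellTerm_numerator, div_le_iff₀ (by linarith)]
  nlinarith [norm_nonneg (jacobiTheta₂_term n (v + τ / 2) τ)]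

lemma inv_one_sub_eq_geom_sum_div {K : Type*} [Field K] {y : K} (T : ℕ) (hy : y ^ T ≠ 1) :
    (1 - y)⁻¹ = (∑ t ∈ Finset.range T, y ^ t) / (1 - y ^ T) := by
  have hgeom : (1 - y) * ∑ t ∈ Finset.range T, y ^ t = 1 - y ^ T := mul_neg_geom_sum y T
  have hT : 1 - y ^ T ≠ 0 := sub_ne_zero.mpr hy.symm
  rw [eq_div_iff hT, ← hgeom, inv_mul_cancel_left₀ (left_ne_zero_of_mul (hgeom ▸ hT))]

lemma exp_two_pi_I_pow_ne_one {T : ℕ} (hT : T ≠ 0) {τ u : ℂ}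
    (hu : ∀ a b : ℤ, u ≠ a / T + b * τ) (n : ℤ) : cexp (2 * π * I * (u + n * τ)) ^ T ≠ 1 := by
  rw [← Complex.exp_nat_mul, Ne, Complex.exp_eq_one_iff]
  rintro ⟨k, hk⟩
  have hk' : (T : ℂ) * (u + n * τ) = k :=
    mul_right_cancel₀ (by simp [pi_ne_zero] : 2 * (π : ℂ) * I ≠ 0) (by linear_combination hk)
  apply hu k (-n)
  field_simp
  push_cast
  linear_combination hk'

lemma neg_one_zpow_eq_exp (k : ℤ) : (-1 : ℂ) ^ k = cexp (π * I * k) := by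
  rw [← exp_pi_mul_I, ← exp_int_mul, mul_comm]

lemma exp_mul_appellTTerm_eq_sum (T : ℕ) (u v τ : ℂ) (n : ℤ)
    (hy : cexp (2 * π * I * (u + n * τ)) ^ T ≠ 1) :
    cexp (π * I * u * T) * appellTTerm T u v τ n =
      ∑ t ∈ Finset.range T, cexp (2 * π * I * u * t) *
        (cexp (π * I * (T * u)) * appellTerm (T * u) (v + t * τ + ((T : ℂ) - 1) / 2) (T * τ) n) := by
  set y := cexp (2 * π * I * (u + n * τ))
  set N := cexp (π * I * u * T) *
    ((-1 : ℂ) ^ ((T : ℤ) * n) * cexp (π * I * T * n * ((n : ℂ) + 1) * τ + 2 * π * I * n * v))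
  have hden : 1 - cexp (2 * π * I * u) * cexp (2 * π * I * n * τ) = 1 - y := by
    simp only [y, ← Complex.exp_add]; ring_nf
  have hdenT : 1 - cexp (2 * π * I * n * (T * τ) + 2 * π * I * (T * u)) = 1 - y ^ T := by
    simp only [y, ← Complex.exp_nat_mul]; ring_nf
  have hnum (t : ℕ) : cexp (2 * π * I * u * t) * (cexp (π * I * (T * u)) * ((-1 : ℂ) ^ n *
      cexp (π * I * ((n : ℂ) ^ 2 + n) * (T * τ) + 2 * π * I * n * (v + t * τ + ((T : ℂ) - 1) / 2))))
      = N * y ^ t := by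
    simp only [N, y, neg_one_zpow_eq_exp, ← Complex.exp_nat_mul, ← Complex.exp_add]
    congr 1
    push_cast
    ring
  calc cexp (π * I * u * T) * appellTTerm T u v τ n = N * (1 - y)⁻¹ := by
        rw [appellTTerm, hden]; ring
    _ = ∑ t ∈ Finset.range T, N * y ^ t / (1 - y ^ T) := by
        rw [inv_one_sub_eq_geom_sum_div T hy, ← mul_div_assoc, Finset.mul_sum, Finset.sum_div]
    _ = _ := Finset.sum_congr rfl fun t _ => by rw [appellTerm, hdenT, ← hnum t]; ring

theorem appellT_eq_sum_appell_general (T : ℕ) (hTpos : 0 < T) (τ u v : ℂ)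
    (hτ : 0 < τ.im) (hu : ∀ a b : ℤ, u ≠ (a : ℂ) / T + (b : ℂ) * τ) :
    appellT T u v τ =
      ∑ t ∈ Finset.range T,
        Complex.exp (2 * π * I * u * t) *
          appell (T * u) (v + t * τ + ((T : ℂ) - 1) / 2) (T * τ) := by
  have hTτ : 0 < ((T : ℂ) * τ).im := by simpa using mul_pos (Nat.cast_pos.mpr hTpos) hτ
  have hsummable (t : ℕ) : Summable fun n : ℤ => cexp (2 * π * I * u * t) *
      (cexp (π * I * (T * u)) * appellTerm (T * u) (v + t * τ + ((T : ℂ) - 1) / 2) (T * τ) n) :=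
    ((summable_appellTerm _ _ hTτ).mul_left _).mul_left _
  calc appellT T u v τ = ∑' n : ℤ, cexp (π * I * u * T) * appellTTerm T u v τ n := by
        rw [appellT_eq_mul_tsum, tsum_mul_left]
    _ = ∑' n : ℤ, ∑ t ∈ Finset.range T, cexp (2 * π * I * u * t) *
          (cexp (π * I * (T * u)) * appellTerm (T * u) (v + t * τ + ((T : ℂ) - 1) / 2) (T * τ) n) :=
        tsum_congr fun n =>
          exp_mul_appellTTerm_eq_sum T u v τ n (exp_two_pi_I_pow_ne_one hTpos.ne' hu n)
    _ = _ := by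
        rw [Summable.tsum_finsetSum fun t _ => hsummable t]
        simp only [tsum_mul_left, appell_eq_mul_tsum]

/-- `A_T(u,v;τ) = ∑_{t=0}^{T−1} e^{2πiut}·A(Tu, v + tτ + (T−1)/2; Tτ)`. -/
theorem appellT_eq_sum_appell (T : ℕ) (hT : Odd T) (hTpos : 0 < T) (τ u v : ℂ)
    (hτ : 0 < τ.im) (hu : ∀ a b : ℤ, u ≠ (a : ℂ) / T + (b : ℂ) * τ) :
    appellT T u v τ =
      ∑ t ∈ Finset.range T,
        Complex.exp (2 * π * I * u * t) *
          appell (T * u) (v + t * τ + ((T : ℂ) - 1) / 2) (T * τ) :=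
  appellT_eq_sum_appell_general T hTpos τ u v hτ hu
end

section
/- Let T be an odd positive integer, k a positive integer, and h an integer with gcd(h,k) = 1; set γ := gcd(T,k) and γ' := T/γ. Then for every w ∈ ℂ with sinh(w) ≠ 0: Σ_{t=−(T−1)/2}^{(T−1)/2} e^{−2w·ρ_T(t·γ'·h)/γ'} = γ'·sinh(γw)/sinh(w). (Equivalently, (1/(γ'·sinh(γw)))·Σ_t e^{−2w·ρ_T(tγ'h)/γ'} = 1/sinh(w), independently of h and k.) -/
/-!
Write `T = γ' γ`; both factors are odd, and `ρ_T (γ' x) = γ' ρ_γ (x)`, so the `t`-th summand is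
`exp (-2 w ρ_γ (t h))` and only depends on `t h mod γ`. The `T` consecutive values of `t` cover
every residue mod `γ` exactly `γ'` times, and so do the `t h` because `h` is a unit mod `γ`.
Since `ρ_γ` enumerates `-(γ-1)/2, …, (γ-1)/2`, what remains is `γ'` times a symmetric geometric
sum, which telescopes after multiplication by `sinh w`.
-/

open Complex Finset

theorem Int.mul_bmod_mul_of_odd {a c : ℕ} (ha : 0 < a) (hc : Odd c) (b : ℤ) :
    (a * b).bmod (a * c) = a * b.bmod c := by
  obtain ⟨m, rfl⟩ := hc
  rw [Int.bmod_eq_iff (by positivity)]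
  have hge := Int.le_bmod (x := b) (m := 2 * m + 1) (by omega)
  have hlt := Int.bmod_lt (x := b) (m := 2 * m + 1) (by omega)
  have hlo : -((a : ℤ) * m) ≤ a * b.bmod (2 * m + 1) := by
    rw [← mul_neg]; exact mul_le_mul_of_nonneg_left (by omega) (by positivity)
  have hhi : (a : ℤ) * b.bmod (2 * m + 1) ≤ a * m :=
    mul_le_mul_of_nonneg_left (by omega) (by positivity)
  have hexp : ((a * (2 * m + 1) : ℕ) : ℤ) = 2 * (a * m) + a := by push_cast; ring
  refine ⟨by omega, by omega, ?_⟩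
  push_cast
  rw [← mul_sub]
  exact mul_dvd_mul_left _ Int.dvd_bmod_sub_self

theorem ZMod.valMinAbs_intCast_of_odd {n : ℕ} (hn : Odd n) (x : ℤ) :
    (x : ZMod n).valMinAbs = x.bmod n := by
  have : NeZero n := ⟨hn.pos.ne'⟩
  rw [ZMod.valMinAbs_spec, ZMod.intCast_eq_intCast_iff_dvd_sub, Set.mem_Ioc]
  have hge := Int.le_bmod (x := x) hn.pos
  have hlt := Int.bmod_lt (x := x) hn.pos
  obtain ⟨m, rfl⟩ := hn
  exact ⟨Int.dvd_bmod_sub_self, by push_cast at *; omega⟩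

theorem ZMod.sum_valMinAbs_of_odd {M : Type*} [AddCommMonoid M] {n : ℕ} [NeZero n] (hn : Odd n)
    (f : ℤ → M) :
    ∑ x : ZMod n, f x.valMinAbs = ∑ t ∈ Icc (-(((n : ℤ) - 1) / 2)) (((n : ℤ) - 1) / 2), f t := by
  have hspec (x : ZMod n) (t : ℤ) :
      x.valMinAbs = t ↔ x = t ∧ t ∈ Icc (-(((n : ℤ) - 1) / 2)) (((n : ℤ) - 1) / 2) := by
    rw [ZMod.valMinAbs_spec]
    refine and_congr_right fun _ => ?_
    obtain ⟨m, rfl⟩ := hn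
    simp only [Set.mem_Ioc, mem_Icc]
    push_cast
    omega
  refine sum_nbij' ZMod.valMinAbs (fun t => (t : ZMod n)) (fun x _ => ((hspec x _).mp rfl).2)
    (fun _ _ => mem_univ _) (fun x _ => ZMod.coe_valMinAbs x)
    (fun t ht => (hspec _ t).mpr ⟨rfl, ht⟩) (fun _ _ => rfl)

theorem ZMod.sum_castHom {M : Type*} [AddCommMonoid M] {m n : ℕ} [NeZero m] [NeZero n]
    (hmn : m ∣ n) (g : ZMod m → M) :
    ∑ y : ZMod n, g (ZMod.castHom hmn (ZMod m) y) = (n / m) • ∑ x, g x := by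
  set f := ZMod.castHom hmn (ZMod m)
  have hsurj : Function.Surjective f := ZMod.castHom_surjective hmn
  have hfiber (x : ZMod m) : #{y | f y = x} = #{y | f y = 0} :=
    AddMonoidHom.card_fiber_eq_of_mem_range f.toAddMonoidHom (hsurj x) (hsurj 0)
  have hcard : n = m * #{y | f y = 0} := by
    simpa [hfiber] using card_eq_sum_card_fiberwise (f := f) (s := univ) (t := univ) (by simp)
  rw [sum_comp, image_univ_of_surjective hsurj, smul_sum]
  simp only [hfiber, hcard, Nat.mul_div_cancel_left _ (Nat.pos_of_neZero m)]

theorem Complex.sinh_mul_sum_exp_Icc (w : ℂ) (m : ℕ) :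
    sinh w * ∑ s ∈ Icc (-(m : ℤ)) m, exp (-2 * w * s) = sinh ((2 * m + 1) * w) := by
  set F : ℤ → ℂ := fun s => exp ((1 - 2 * s) * w) / 2
  have htel (s : ℤ) : sinh w * exp (-2 * w * s) = F s - F (s + 1) := by
    simp only [F, Complex.sinh, sub_div, div_mul_eq_mul_div, sub_mul, ← Complex.exp_add]
    push_cast
    ring_nf
  rw [mul_sum, sum_Icc_eq_sum_Ico_add _ (by omega)]
  simp only [htel]
  rw [sum_Ico_int_sub, Complex.sinh]
  simp only [F]
  push_cast
  ring_nf

theorem Complex.sinh_mul_sum_exp_valMinAbs {n : ℕ} [NeZero n] (hn : Odd n) (w : ℂ) :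
    sinh w * ∑ x : ZMod n, exp (-2 * w * x.valMinAbs) = sinh (n * w) := by
  obtain ⟨m, rfl⟩ := hn
  have hmid : (((2 * m + 1 : ℕ) : ℤ) - 1) / 2 = m := by omega
  rw [ZMod.sum_valMinAbs_of_odd ⟨m, rfl⟩ fun s => exp (-2 * w * s), hmid,
    sinh_mul_sum_exp_Icc]
  push_cast
  rfl

theorem sum_exp_rho_eq_general (T k : ℕ) (hT : Odd T)
    (h : ℤ) (hcop : Int.gcd h k = 1) (w : ℂ) (hw : Complex.sinh w ≠ 0) :
    ∑ t ∈ Finset.Icc (-(((T : ℤ) - 1) / 2)) (((T : ℤ) - 1) / 2),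
        Complex.exp (-2 * w *
            ((Int.bmod (t * ((T / Nat.gcd T k : ℕ) : ℤ) * h) T : ℤ) : ℂ) /
          ((T / Nat.gcd T k : ℕ) : ℂ)) =
      ((T / Nat.gcd T k : ℕ) : ℂ) * Complex.sinh ((Nat.gcd T k : ℂ) * w) /
        Complex.sinh w := by
  set γ := Nat.gcd T k
  set γ' := T / γ
  have hγT : γ ∣ T := Nat.gcd_dvd_left T k
  have hT_eq : γ' * γ = T := Nat.div_mul_cancel hγT
  obtain ⟨hγ', hγ⟩ : Odd γ' ∧ Odd γ := Nat.odd_mul.mp (hT_eq ▸ hT)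
  have : NeZero T := ⟨hT.pos.ne'⟩
  have : NeZero γ := ⟨hγ.pos.ne'⟩
  let u : (ZMod γ)ˣ := ZMod.unitOfIsCoprime h <|
    (Int.isCoprime_iff_gcd_eq_one.mpr hcop).of_isCoprime_of_dvd_right
      (Int.natCast_dvd_natCast.mpr (Nat.gcd_dvd_right T k))
  let φ : ℤ → ℂ := fun s => exp (-2 * w * s)
  have hsummand (t : ℤ) :
      exp (-2 * w * ((t * γ' * h).bmod T : ℤ) / γ') = φ (((t : ZMod γ) * u).valMinAbs) := by
    have hbmod := Int.mul_bmod_mul_of_odd hγ'.pos hγ (t * h)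
    rw [hT_eq] at hbmod
    rw [show t * γ' * h = γ' * (t * h) by ring, hbmod, ZMod.coe_unitOfIsCoprime, ← Int.cast_mul,
      ZMod.valMinAbs_intCast_of_odd hγ]
    simp only [φ]
    push_cast
    field_simp [Nat.cast_ne_zero.mpr hγ'.pos.ne']
  calc _ = ∑ t ∈ Icc (-(((T : ℤ) - 1) / 2)) (((T : ℤ) - 1) / 2),
          φ (((t : ZMod γ) * u).valMinAbs) :=
        sum_congr rfl fun t _ => hsummand t
    _ = ∑ y : ZMod T, φ ((ZMod.castHom hγT (ZMod γ) y * u).valMinAbs) := by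
        rw [← ZMod.sum_valMinAbs_of_odd hT]
        simp only [← map_intCast (ZMod.castHom hγT (ZMod γ)), ZMod.coe_valMinAbs]
    _ = γ' • ∑ x : ZMod γ, φ x.valMinAbs := by
        rw [ZMod.sum_castHom hγT fun x => φ (x * u).valMinAbs,
          Fintype.sum_equiv (Units.mulRight u) (fun x => φ (x * u).valMinAbs)
            (fun x => φ x.valMinAbs) fun _ => rfl]
    _ = _ := by
        rw [eq_div_iff hw, nsmul_eq_mul, mul_right_comm, mul_assoc,
          sinh_mul_sum_exp_valMinAbs hγ]

/-- For odd positive `T`, `ρ_T(x) = Int.bmod x T` is the residue of `x` modulo `T` of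
smallest absolute value. With `γ = gcd(T,k)` and `γ' = T/γ`,
`∑_{t=−(T−1)/2}^{(T−1)/2} e^{−2w·ρ_T(tγ'h)/γ'} = γ'·sinh(γw)/sinh(w)`. -/
theorem sum_exp_rho_eq (T k : ℕ) (hT : Odd T) (hTpos : 0 < T) (hk : 0 < k)
    (h : ℤ) (hcop : Int.gcd h k = 1) (w : ℂ) (hw : Complex.sinh w ≠ 0) :
    ∑ t ∈ Finset.Icc (-(((T : ℤ) - 1) / 2)) (((T : ℤ) - 1) / 2),
        Complex.exp (-2 * w *
            ((Int.bmod (t * ((T / Nat.gcd T k : ℕ) : ℤ) * h) T : ℤ) : ℂ) /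
          ((T / Nat.gcd T k : ℕ) : ℂ)) =
      ((T / Nat.gcd T k : ℕ) : ℂ) * Complex.sinh ((Nat.gcd T k : ℂ) * w) /
        Complex.sinh w :=
  sum_exp_rho_eq_general T k hT h hcop w hw
end

section
/- Let d ∈ 1/2 + ℤ and let δ be real with |δ| ≤ 1. There is a constant C = C(d,δ) > 0 such that in the circle-method setup, for every B > 0 and every continuous function E on {k/n − ikφ : φ ∈ [−ϑ', ϑ'']} satisfying |E(z)| ≤ B for all such z: |∫_{−ϑ'}^{ϑ''} z^d·e^{(πz/k)(2n+δ)}·E(z) dφ| ≤ C·B·(1/(k√n))·(n/k)^{|d|}. -/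
/-! On the arc, `k/n ≤ |z| ≤ 2/N` and `Re z = k/n`, so `|z^d| ≤ 2^|d| (n/k)^|d|` whatever the sign
of `d`, and `|e^{(πz/k)(2n+δ)}| = e^{π(2n+δ)/n} ≤ e^{3π}`. The integrand is therefore bounded by a
constant multiple of `B (n/k)^|d|`, and the arc has length at most `2/(kN) ≤ 4/(k√n)`. -/

open Complex Real

lemma Real.rpow_le_rpow_abs_mul_rpow_abs {x r c : ℝ} (d : ℝ) (hr : 1 ≤ r) (hc : 1 ≤ c)
    (hlo : r⁻¹ ≤ x) (hhi : x ≤ c * r) : x ^ d ≤ c ^ |d| * r ^ |d| := by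
  have hr₀ : 0 < r := by linarith
  have hx₀ : 0 < x := lt_of_lt_of_le (inv_pos.2 hr₀) hlo
  rw [← Real.mul_rpow (by linarith) hr₀.le]
  rcases le_or_gt 0 d with hd | hd
  · rw [abs_of_nonneg hd]
    exact Real.rpow_le_rpow hx₀.le hhi hd
  · rw [abs_of_neg hd]
    calc x ^ d ≤ r⁻¹ ^ d := Real.rpow_le_rpow_of_nonpos (inv_pos.2 hr₀) hlo hd.le
      _ = r ^ (-d) := by rw [Real.inv_rpow hr₀.le, Real.rpow_neg hr₀.le]
      _ ≤ (c * r) ^ (-d) := Real.rpow_le_rpow hr₀.le (le_mul_of_one_le_left hr₀.le hc) (by linarith)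

lemma Real.sqrt_le_two_mul_nat_sqrt {n : ℕ} (h : 1 ≤ Nat.sqrt n) : √n ≤ 2 * Nat.sqrt n := by
  have : (1 : ℝ) ≤ Nat.sqrt n := by exact_mod_cast h
  linarith [Real.real_sqrt_lt_nat_sqrt_succ (a := n)]

lemma two_div_mul_nat_sqrt_le {n : ℕ} {k : ℝ} (hk : 0 < k) (h : 1 ≤ Nat.sqrt n) :
    2 / (k * Nat.sqrt n) ≤ 4 / (k * √n) := by
  have : (0 : ℝ) < Nat.sqrt n := by exact_mod_cast h
  have : (0 : ℝ) < n := by exact_mod_cast Nat.sqrt_pos.1 h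
  rw [div_le_div_iff₀ (by positivity) (by positivity)]
  nlinarith [Real.sqrt_le_two_mul_nat_sqrt h]

lemma Nat.mul_sqrt_le_of_le_sqrt {n k : ℕ} (h : k ≤ Nat.sqrt n) : k * Nat.sqrt n ≤ n :=
  (Nat.mul_le_mul_right _ h).trans (Nat.sqrt_le n)

section Arc

variable {n k : ℕ} {N φ : ℝ}

lemma re_arc : ((k : ℂ) / n - I * k * φ).re = k / n := by simp

lemma div_le_norm_arc : (k : ℝ) / n ≤ ‖(k : ℂ) / n - I * k * φ‖ :=
  re_arc.symm.trans_le (Complex.re_le_norm _)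

lemma norm_arc_le (hk : 0 < k) (hN : 0 < N) (hkN : k * N ≤ n) (hφ : |φ| ≤ 1 / (k * N)) :
    ‖(k : ℂ) / n - I * k * φ‖ ≤ 2 / N := by
  have hk' : (0 : ℝ) < k := by exact_mod_cast hk
  have hn : (0 : ℝ) < n := (by positivity : (0 : ℝ) < k * N).trans_le hkN
  have hre : (k : ℝ) / n ≤ 1 / N := by
    rw [div_le_div_iff₀ hn hN]; linarith
  have him : k * |φ| ≤ 1 / N := by
    calc k * |φ| ≤ k * (1 / (k * N)) := by gcongr
      _ = 1 / N := by field_simp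
  calc ‖(k : ℂ) / n - I * k * φ‖ ≤ |(k : ℝ) / n| + |(k : ℝ) * φ| := by
        simpa using Complex.norm_le_abs_re_add_abs_im ((k : ℂ) / n - I * k * φ)
    _ ≤ 2 / N := by
      rw [abs_of_nonneg (by positivity), abs_mul, Nat.abs_cast]
      linarith [show 2 / N = 1 / N + 1 / N by ring]

lemma norm_arc_cpow_le (d : ℝ) (hk : 0 < k) (hN : 1 ≤ N) (hkN : k * N ≤ n)
    (hφ : |φ| ≤ 1 / (k * N)) :
    ‖((k : ℂ) / n - I * k * φ) ^ (d : ℂ)‖ ≤ 2 ^ |d| * ((n : ℝ) / k) ^ |d| := by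
  have hk' : (0 : ℝ) < k := by exact_mod_cast hk
  have hnk : 1 ≤ (n : ℝ) / k := by rw [le_div_iff₀ hk']; nlinarith
  rw [Complex.norm_cpow_real]
  refine Real.rpow_le_rpow_abs_mul_rpow_abs d hnk one_le_two ?_ ?_
  · simpa using div_le_norm_arc
  · calc _ ≤ 2 / N := norm_arc_le hk (by linarith) hkN hφ
      _ ≤ 2 := div_le_self zero_le_two hN
      _ ≤ 2 * ((n : ℝ) / k) := by linarith

lemma norm_exp_arc_le {δ : ℝ} (hn : 0 < n) (hk : 0 < k) (hδ : δ ≤ n) :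
    ‖Complex.exp (π * ((k : ℂ) / n - I * k * φ) / k * (2 * n + δ))‖ ≤ Real.exp (3 * π) := by
  have hn' : (0 : ℝ) < n := by exact_mod_cast hn
  have hk' : (k : ℂ) ≠ 0 := by exact_mod_cast hk.ne'
  have harg : π * ((k : ℂ) / n - I * k * φ) / k * (2 * n + δ)
      = ((π / k * (2 * n + δ) : ℝ) : ℂ) * ((k : ℂ) / n - I * k * φ) := by
    push_cast; field_simp
  rw [harg, Complex.norm_exp, Complex.re_ofReal_mul, Real.exp_le_exp]
  have hk'' : (k : ℝ) ≠ 0 := by exact_mod_cast hk.ne'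
  rw [re_arc, show π / k * (2 * n + δ) * (k / n) = π * (2 * n + δ) / n by field_simp,
    div_le_iff₀ hn']
  nlinarith [Real.pi_pos]

end Arc

theorem circle_integral_bounded_error_general (d : ℝ)
    (δ : ℝ) (hδ : |δ| ≤ 1) :
    ∃ C > 0, ∀ n : ℕ, 2 ≤ n → ∀ k : ℕ, 1 ≤ k → k ≤ Nat.sqrt n →
      ∀ ϑ₁ ϑ₂ : ℝ,
        1 / (2 * k * (Nat.sqrt n : ℝ)) ≤ ϑ₁ → ϑ₁ ≤ 1 / (k * (Nat.sqrt n : ℝ)) →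
        1 / (2 * k * (Nat.sqrt n : ℝ)) ≤ ϑ₂ → ϑ₂ ≤ 1 / (k * (Nat.sqrt n : ℝ)) →
        ∀ B : ℝ, 0 < B → ∀ E : ℂ → ℂ,
          ContinuousOn E ((fun φ : ℝ => (k : ℂ) / n - I * k * φ) '' Set.Icc (-ϑ₁) ϑ₂) →
          (∀ w ∈ (fun φ : ℝ => (k : ℂ) / n - I * k * φ) '' Set.Icc (-ϑ₁) ϑ₂,
            ‖E w‖ ≤ B) →
          ‖(∫ φ : ℝ in (-ϑ₁)..ϑ₂,
                ((k : ℂ) / n - I * k * φ) ^ (d : ℂ) *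
                  Complex.exp (π * ((k : ℂ) / n - I * k * φ) / k * (2 * n + δ)) *
                  E ((k : ℂ) / n - I * k * φ))‖ ≤
            C * B * (1 / (k * Real.sqrt n)) * ((n : ℝ) / k) ^ |d| := by
  refine ⟨4 * 2 ^ |d| * Real.exp (3 * π), by positivity, ?_⟩
  intro n hn k hk hkN ϑ₁ ϑ₂ hϑ₁l hϑ₁u hϑ₂l hϑ₂u B _ E _ hEB
  have hN : 1 ≤ Nat.sqrt n := hk.trans hkN
  have hN' : (1 : ℝ) ≤ Nat.sqrt n := by exact_mod_cast hN
  have hkN' : (k : ℝ) * Nat.sqrt n ≤ n := by exact_mod_cast Nat.mul_sqrt_le_of_le_sqrt hkN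
  have hδn : δ ≤ n := by
    have : (2 : ℝ) ≤ n := by exact_mod_cast hn
    linarith [(abs_le.1 hδ).2]
  have hϑ₁ : 0 < ϑ₁ := lt_of_lt_of_le (by positivity) hϑ₁l
  have hϑ₂ : 0 < ϑ₂ := lt_of_lt_of_le (by positivity) hϑ₂l
  have hpt : ∀ φ ∈ Set.uIoc (-ϑ₁) ϑ₂, ‖((k : ℂ) / n - I * k * φ) ^ (d : ℂ) *
      Complex.exp (π * ((k : ℂ) / n - I * k * φ) / k * (2 * n + δ)) *
      E ((k : ℂ) / n - I * k * φ)‖ ≤ 2 ^ |d| * ((n : ℝ) / k) ^ |d| * Real.exp (3 * π) * B := by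
    intro φ hφ
    rw [Set.uIoc_of_le (by linarith)] at hφ
    have hφ' : |φ| ≤ 1 / (k * Nat.sqrt n) := abs_le.2 ⟨by linarith [hφ.1], by linarith [hφ.2]⟩
    rw [norm_mul, norm_mul]
    gcongr
    · exact norm_arc_cpow_le d hk hN' hkN' hφ'
    · exact norm_exp_arc_le (by omega) hk hδn
    · exact hEB _ ⟨φ, Set.Ioc_subset_Icc_self hφ, rfl⟩
  have hlen : |ϑ₂ - -ϑ₁| ≤ 4 / (k * √n) := by
    rw [abs_of_pos (by linarith)]
    have h2 : 2 / (k * Nat.sqrt n : ℝ) = 1 / (k * Nat.sqrt n) + 1 / (k * Nat.sqrt n) := by ring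
    calc ϑ₂ - -ϑ₁ ≤ 2 / (k * Nat.sqrt n) := by linarith
      _ ≤ 4 / (k * √n) := two_div_mul_nat_sqrt_le (by positivity) hN
  calc _ ≤ _ * |ϑ₂ - -ϑ₁| := intervalIntegral.norm_integral_le_of_norm_le_const hpt
    _ ≤ 2 ^ |d| * ((n : ℝ) / k) ^ |d| * Real.exp (3 * π) * B * (4 / (k * √n)) := by gcongr
    _ = _ := by ring

/-- Integrating a uniformly bounded continuous function against `z^d·e^{(πz/k)(2n+δ)}`
over a circle-method arc gives `O(B·(1/(k√n))·(n/k)^{|d|})`. -/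
theorem circle_integral_bounded_error (d : ℝ) (hd : ∃ m : ℤ, d = m + 1 / 2)
    (δ : ℝ) (hδ : |δ| ≤ 1) :
    ∃ C > 0, ∀ n : ℕ, 2 ≤ n → ∀ k : ℕ, 1 ≤ k → k ≤ Nat.sqrt n →
      ∀ ϑ₁ ϑ₂ : ℝ,
        1 / (2 * k * (Nat.sqrt n : ℝ)) ≤ ϑ₁ → ϑ₁ ≤ 1 / (k * (Nat.sqrt n : ℝ)) →
        1 / (2 * k * (Nat.sqrt n : ℝ)) ≤ ϑ₂ → ϑ₂ ≤ 1 / (k * (Nat.sqrt n : ℝ)) →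
        ∀ B : ℝ, 0 < B → ∀ E : ℂ → ℂ,
          ContinuousOn E ((fun φ : ℝ => (k : ℂ) / n - I * k * φ) '' Set.Icc (-ϑ₁) ϑ₂) →
          (∀ w ∈ (fun φ : ℝ => (k : ℂ) / n - I * k * φ) '' Set.Icc (-ϑ₁) ϑ₂,
            ‖E w‖ ≤ B) →
          ‖(∫ φ : ℝ in (-ϑ₁)..ϑ₂,
                ((k : ℂ) / n - I * k * φ) ^ (d : ℂ) *
                  Complex.exp (π * ((k : ℂ) / n - I * k * φ) / k * (2 * n + δ)) *
                  E ((k : ℂ) / n - I * k * φ))‖ ≤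
            C * B * (1 / (k * Real.sqrt n)) * ((n : ℝ) / k) ^ |d| :=
  circle_integral_bounded_error_general d δ hδ
end

section
/- Let β > 0 and δ be real with |δ| ≤ 1, and let d ∈ 1/2 + ℤ. There is a constant C = C(d,β,δ) > 0 such that for all integers n ≥ 2, N := ⌊√n⌋, all integers k with 1 ≤ k ≤ N, and uniformly for all x ∈ [−1,1]: (1/k)·|∫_{−k/n}^{k/n} (s + i/N)^d·e^{(π/k)(2n+δ)(s + i/N)}·e^{πβ(1−x²)/(k(s + i/N))} ds| ≤ C·(1/(k√n))·(n/k)^{|d|}, where (s+i/N)^d is the principal branch; the same bound holds with i/N replaced by −i/N. -/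
/-!
On the segments `z = s ± i/N`, `|s| ≤ k/n`, the constraints `k ≤ N`, `N² ≤ n` give
`k/n ≤ 1/N ≤ |z| ≤ 2` and `Re z ≤ k/n ≤ k |z|²`. Hence `|z^d| ≤ 2^|d| (n/k)^|d|`,
`|e^{(π/k)(2n+δ)z}| ≤ e^{π(2n+δ)/n} ≤ e^{3π}` and `|e^{πβ(1-x²)/(kz)}| ≤ e^{πβ}`.
Integrating over a segment of length `2k/n` and using `k √n ≤ n` gives the bound.
-/

open Complex Real

theorem norm_cpow_real_le_of_inv_le_of_le {z : ℂ} {L M : ℝ} (d : ℝ) (hL : 1 ≤ L) (hM : 1 ≤ M)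
    (hlow : M⁻¹ ≤ ‖z‖) (hup : ‖z‖ ≤ L) : ‖z ^ (d : ℂ)‖ ≤ L ^ |d| * M ^ |d| := by
  have hM0 : 0 < M := by linarith
  rw [norm_cpow_real]
  rcases le_or_gt 0 d with hd | hd
  · rw [abs_of_nonneg hd]
    calc ‖z‖ ^ d ≤ L ^ d := rpow_le_rpow (norm_nonneg z) hup hd
      _ ≤ L ^ d * M ^ d := le_mul_of_one_le_right (by positivity) (one_le_rpow hM hd)
  · rw [abs_of_neg hd]
    calc ‖z‖ ^ d ≤ M⁻¹ ^ d := rpow_le_rpow_of_nonpos (by positivity) hlow hd.le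
      _ = M ^ (-d) := by rw [inv_rpow hM0.le, rpow_neg hM0.le]
      _ ≤ L ^ (-d) * M ^ (-d) :=
        le_mul_of_one_le_left (by positivity) (one_le_rpow hL (by linarith))

theorem norm_exp_ofReal_mul_le {a b : ℝ} {z : ℂ} (ha : 0 ≤ a) (hz : z.re ≤ b) :
    ‖exp (a * z)‖ ≤ Real.exp (a * b) := by
  rw [norm_exp, re_ofReal_mul]
  exact Real.exp_le_exp.mpr (mul_le_mul_of_nonneg_left hz ha)

theorem re_ofReal_div_le {c : ℝ} {w : ℂ} (hc : 0 ≤ c) (hw : w.re ≤ normSq w) :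
    (c / w).re ≤ c := by
  rw [div_re, ofReal_re, ofReal_im, zero_mul, zero_div, add_zero, mul_div_assoc]
  rcases (normSq_nonneg w).eq_or_lt with h0 | hpos
  · rw [← h0, div_zero, mul_zero]
    exact hc
  · exact mul_le_of_le_one_right hc ((div_le_one hpos).mpr hw)

theorem norm_exp_ofReal_div_le {c : ℝ} {w : ℂ} (hc : 0 ≤ c) (hw : w.re ≤ normSq w) :
    ‖exp (c / w)‖ ≤ Real.exp c := by
  rw [norm_exp]
  exact Real.exp_le_exp.mpr (re_ofReal_div_le hc hw)

theorem norm_exp_linear_le {δ : ℝ} (hδ : |δ| ≤ 1) {n k : ℕ} (hn : 0 < n) (hk : 0 < k) {z : ℂ}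
    (hz : z.re ≤ k / n) : ‖Complex.exp ((π / k) * (2 * n + δ) * z)‖ ≤ Real.exp (3 * π) := by
  have hn0 : (0 : ℝ) < n := by exact_mod_cast hn
  have hn1 : (1 : ℝ) ≤ n := by exact_mod_cast hn
  have hk0 : (0 : ℝ) < k := by exact_mod_cast hk
  have hδ' := abs_le.mp hδ
  have ha : 0 ≤ π / k * (2 * n + δ) := mul_nonneg (by positivity) (by linarith)
  calc ‖Complex.exp ((π / k) * (2 * n + δ) * z)‖
      = ‖Complex.exp (((π / k * (2 * n + δ) : ℝ) : ℂ) * z)‖ := by push_cast; rfl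
    _ ≤ Real.exp (π / k * (2 * n + δ) * (k / n)) := norm_exp_ofReal_mul_le ha hz
    _ = Real.exp (π * (2 + δ / n)) := by congr 1; field_simp
    _ ≤ Real.exp (3 * π) := by
        have : δ / n ≤ 1 := by rw [div_le_one hn0]; linarith
        rw [Real.exp_le_exp]; nlinarith [pi_pos]

theorem norm_exp_inverse_le {β x : ℝ} (hβ : 0 < β) (hx : x ∈ Set.Icc (-1 : ℝ) 1) {w : ℂ}
    (hw : w.re ≤ normSq w) : ‖Complex.exp (π * β * (1 - x ^ 2) / w)‖ ≤ Real.exp (π * β) := by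
  have hπβ : 0 < π * β := mul_pos pi_pos hβ
  have hx2 : x ^ 2 ≤ 1 := by nlinarith [hx.1, hx.2]
  calc ‖Complex.exp (π * β * (1 - x ^ 2) / w)‖
      = ‖Complex.exp (((π * β * (1 - x ^ 2) : ℝ) : ℂ) / w)‖ := by push_cast; rfl
    _ ≤ Real.exp (π * β * (1 - x ^ 2)) :=
        norm_exp_ofReal_div_le (mul_nonneg hπβ.le (by linarith)) hw
    _ ≤ Real.exp (π * β) := by rw [Real.exp_le_exp]; nlinarith [mul_nonneg hπβ.le (sq_nonneg x)]

noncomputable def schlafliIntegrand (β δ d x : ℝ) (n k : ℕ) (z : ℂ) : ℂ :=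
  z ^ (d : ℂ) * Complex.exp ((π / k) * (2 * n + δ) * z) *
    Complex.exp (π * β * (1 - x ^ 2) / (k * z))

theorem norm_schlafliIntegrand_le {β δ d x : ℝ} (hβ : 0 < β) (hδ : |δ| ≤ 1)
    (hx : x ∈ Set.Icc (-1 : ℝ) 1) {n k N : ℕ} (hk : 0 < k) (hkN : k ≤ N) (hNn : N * N ≤ n)
    {z : ℂ} (hre : |z.re| ≤ k / n) (him : |z.im| = (N : ℝ)⁻¹) :
    ‖schlafliIntegrand β δ d x n k z‖ ≤
      2 ^ |d| * Real.exp (3 * π) * Real.exp (π * β) * ((n : ℝ) / k) ^ |d| := by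
  have hkn : k ≤ n := (hkN.trans (Nat.le_mul_self N)).trans hNn
  have hk0 : (0 : ℝ) < k := by exact_mod_cast hk
  have hN0 : (0 : ℝ) < N := by exact_mod_cast hk.trans_le hkN
  have hn0 : (0 : ℝ) < n := by exact_mod_cast hk.trans_le hkn
  have hNn' : (N : ℝ) * N ≤ n := by exact_mod_cast hNn
  have hkn_inv : (k : ℝ) / n ≤ (N : ℝ)⁻¹ := by
    have hkNn : (k : ℝ) * N ≤ n := by exact_mod_cast (Nat.mul_le_mul_right N hkN).trans hNn
    rw [div_le_iff₀ hn0, inv_mul_eq_div, le_div_iff₀ hN0]; exact hkNn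
  have hzre : z.re ≤ k / n := (le_abs_self _).trans hre
  have hpow : ‖z ^ (d : ℂ)‖ ≤ 2 ^ |d| * ((n : ℝ) / k) ^ |d| := by
    have hN1 : (N : ℝ)⁻¹ ≤ 1 := inv_le_one_of_one_le₀ (by exact_mod_cast hk.trans_le hkN)
    refine norm_cpow_real_le_of_inv_le_of_le d one_le_two ?_ ?_ ?_
    · rw [one_le_div hk0]; exact_mod_cast hkn
    · rw [inv_div]; exact hkn_inv.trans (him ▸ abs_im_le_norm z)
    · linarith [norm_le_abs_re_add_abs_im z]
  have hw : (k * z).re ≤ normSq (k * z) := by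
    have him2 : (n : ℝ)⁻¹ ≤ z.im * z.im := by
      rw [← abs_mul_abs_self, him, ← mul_inv]; exact inv_anti₀ (by positivity) hNn'
    rw [← ofReal_natCast, re_ofReal_mul, normSq_mul, normSq_ofReal, normSq_apply]
    calc k * z.re ≤ k * k * (n : ℝ)⁻¹ := by
          rw [mul_assoc, ← div_eq_mul_inv]; exact mul_le_mul_of_nonneg_left hzre hk0.le
      _ ≤ k * k * (z.re * z.re + z.im * z.im) := by gcongr; nlinarith [mul_self_nonneg z.re]
  rw [schlafliIntegrand, norm_mul, norm_mul]
  calc _ ≤ 2 ^ |d| * ((n : ℝ) / k) ^ |d| * Real.exp (3 * π) * Real.exp (π * β) := by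
        gcongr
        exacts [norm_exp_linear_le hδ (hk.trans_le hkn) hk hzre, norm_exp_inverse_le hβ hx hw]
    _ = _ := by ring

theorem norm_integral_neg_le {E : Type*} [NormedAddCommGroup E] [NormedSpace ℝ E] {F : ℝ → E}
    {a M : ℝ} (ha : 0 ≤ a) (hF : ∀ s, |s| ≤ a → ‖F s‖ ≤ M) :
    ‖∫ s in -a..a, F s‖ ≤ 2 * a * M := by
  have hab : -a ≤ a := by linarith
  calc ‖∫ s in -a..a, F s‖ ≤ M * |a - -a| :=
        intervalIntegral.norm_integral_le_of_norm_le_const fun s hs => by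
          rw [Set.uIoc_of_le hab] at hs
          exact hF s (abs_le.mpr ⟨hs.1.le, hs.2⟩)
    _ = 2 * a * M := by rw [sub_neg_eq_add, abs_of_nonneg (by linarith)]; ring

theorem norm_integral_schlafliIntegrand_le {β δ d x : ℝ} (hβ : 0 < β) (hδ : |δ| ≤ 1)
    (hx : x ∈ Set.Icc (-1 : ℝ) 1) {n k N : ℕ} (hk : 0 < k) (hkN : k ≤ N) (hNn : N * N ≤ n)
    (g : ℝ → ℂ) (hg_re : ∀ s, (g s).re = s) (hg_im : ∀ s, |(g s).im| = (N : ℝ)⁻¹) :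
    (1 / (k : ℝ)) *
        ‖∫ s : ℝ in (-(k / n : ℝ))..(k / n : ℝ), schlafliIntegrand β δ d x n k (g s)‖ ≤
      2 * (2 ^ |d| * Real.exp (3 * π) * Real.exp (π * β)) * (1 / (k * Real.sqrt n)) *
        ((n : ℝ) / k) ^ |d| := by
  set M := 2 ^ |d| * Real.exp (3 * π) * Real.exp (π * β) * ((n : ℝ) / k) ^ |d|
  have hk0 : (0 : ℝ) < k := by exact_mod_cast hk
  have hn0 : (0 : ℝ) < n := by
    exact_mod_cast hk.trans_le ((hkN.trans (Nat.le_mul_self N)).trans hNn)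
  have hksqrt : (k : ℝ) * Real.sqrt n ≤ n := by
    have hNsqrt : (N : ℝ) ≤ Real.sqrt n :=
      Real.le_sqrt_of_sq_le (by exact_mod_cast (sq N).trans_le hNn)
    calc (k : ℝ) * Real.sqrt n ≤ Real.sqrt n * Real.sqrt n := by
          gcongr; exact (by exact_mod_cast hkN : (k : ℝ) ≤ N).trans hNsqrt
      _ = n := Real.mul_self_sqrt hn0.le
  have hint : ‖∫ s : ℝ in (-(k / n : ℝ))..(k / n : ℝ), schlafliIntegrand β δ d x n k (g s)‖ ≤
      2 * (k / n) * M :=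
    norm_integral_neg_le (by positivity) fun s hs =>
      norm_schlafliIntegrand_le hβ hδ hx hk hkN hNn ((hg_re s).symm ▸ hs) (hg_im s)
  calc _ ≤ (1 / k) * (2 * (k / n) * M) := by gcongr
    _ = 2 * M * (1 / n) := by field_simp
    _ ≤ 2 * M * (1 / (k * Real.sqrt n)) := by gcongr
    _ = _ := by ring

theorem horizontal_contour_bound_general (β δ : ℝ) (hβ : 0 < β) (hδ : |δ| ≤ 1)
    (d : ℝ) :
    ∃ C > 0, ∀ n : ℕ, 2 ≤ n → ∀ k : ℕ, 1 ≤ k → k ≤ Nat.sqrt n →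
      ∀ x : ℝ, x ∈ Set.Icc (-1 : ℝ) 1 →
        (1 / (k : ℝ)) * ‖
            (∫ s : ℝ in (-(k / n : ℝ))..(k / n : ℝ),
              ((s : ℂ) + I / (Nat.sqrt n : ℝ)) ^ (d : ℂ) *
                Complex.exp ((π / k) * (2 * n + δ) * ((s : ℂ) + I / (Nat.sqrt n : ℝ))) *
                Complex.exp (π * β * (1 - x ^ 2) /
                  (k * ((s : ℂ) + I / (Nat.sqrt n : ℝ)))))‖ ≤
          C * (1 / (k * Real.sqrt n)) * ((n : ℝ) / k) ^ |d| ∧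
        (1 / (k : ℝ)) * ‖
            (∫ s : ℝ in (-(k / n : ℝ))..(k / n : ℝ),
              ((s : ℂ) - I / (Nat.sqrt n : ℝ)) ^ (d : ℂ) *
                Complex.exp ((π / k) * (2 * n + δ) * ((s : ℂ) - I / (Nat.sqrt n : ℝ))) *
                Complex.exp (π * β * (1 - x ^ 2) /
                  (k * ((s : ℂ) - I / (Nat.sqrt n : ℝ)))))‖ ≤
          C * (1 / (k * Real.sqrt n)) * ((n : ℝ) / k) ^ |d| := by
  refine ⟨2 * (2 ^ |d| * Real.exp (3 * π) * Real.exp (π * β)), by positivity,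
    fun n _ k hk hkN x hx => ?_⟩
  have hN : (0 : ℝ) < Nat.sqrt n := by exact_mod_cast hk.trans hkN
  exact ⟨norm_integral_schlafliIntegrand_le hβ hδ hx hk hkN (Nat.sqrt_le n) _ (fun s => by simp)
      fun s => by simp [abs_of_pos hN],
    norm_integral_schlafliIntegrand_le hβ hδ hx hk hkN (Nat.sqrt_le n) _ (fun s => by simp)
      fun s => by simp [abs_of_pos hN]⟩

/-- Bound for the horizontal contour pieces `Γ_h^±` in the contour deformation. -/
theorem horizontal_contour_bound (β δ : ℝ) (hβ : 0 < β) (hδ : |δ| ≤ 1)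
    (d : ℝ) (hd : ∃ m : ℤ, d = m + 1 / 2) :
    ∃ C > 0, ∀ n : ℕ, 2 ≤ n → ∀ k : ℕ, 1 ≤ k → k ≤ Nat.sqrt n →
      ∀ x : ℝ, x ∈ Set.Icc (-1 : ℝ) 1 →
        (1 / (k : ℝ)) * ‖
            (∫ s : ℝ in (-(k / n : ℝ))..(k / n : ℝ),
              ((s : ℂ) + I / (Nat.sqrt n : ℝ)) ^ (d : ℂ) *
                Complex.exp ((π / k) * (2 * n + δ) * ((s : ℂ) + I / (Nat.sqrt n : ℝ))) *
                Complex.exp (π * β * (1 - x ^ 2) /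
                  (k * ((s : ℂ) + I / (Nat.sqrt n : ℝ)))))‖ ≤
          C * (1 / (k * Real.sqrt n)) * ((n : ℝ) / k) ^ |d| ∧
        (1 / (k : ℝ)) * ‖
            (∫ s : ℝ in (-(k / n : ℝ))..(k / n : ℝ),
              ((s : ℂ) - I / (Nat.sqrt n : ℝ)) ^ (d : ℂ) *
                Complex.exp ((π / k) * (2 * n + δ) * ((s : ℂ) - I / (Nat.sqrt n : ℝ))) *
                Complex.exp (π * β * (1 - x ^ 2) /
                  (k * ((s : ℂ) - I / (Nat.sqrt n : ℝ)))))‖ ≤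
          C * (1 / (k * Real.sqrt n)) * ((n : ℝ) / k) ^ |d| :=
  horizontal_contour_bound_general β δ hβ hδ d
end

section
/- Let β > 0 and δ be real with |δ| ≤ 1, and let d ∈ 1/2 + ℤ. There is a constant C = C(d,β,δ) > 0 such that for all integers n ≥ 2, N := ⌊√n⌋, all integers k with 1 ≤ k ≤ N, and uniformly for all x ∈ [−1,1]: (1/k)·|∫_{0}^{1/N} (−k/n + it)^d·e^{(π/k)(2n+δ)(−k/n + it)}·e^{πβ(1−x²)/(k(−k/n + it))} dt| ≤ C·(1/(k√n))·(n/k)^{|d|}, where (−k/n+it)^d is the principal branch; the same bound holds for the segment {−k/n − it : 0 ≤ t ≤ 1/N}. -/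
open Complex Real

/-!
On both segments `z = -k/n ± it` has `Re z = -k/n < 0`, so with `a = π(2n+δ)/k ≥ 0` and
`c = πβ(1-x²)/k ≥ 0` both exponentials `e^{a z}` and `e^{c/z}` have modulus at most `1`, and the
integrand is bounded by `|z|^d`. Since `k/n ≤ |z| ≤ 2`, this is at most `2^|d| (n/k)^|d|`, and the
segment has length `1/⌊√n⌋ ≤ 2/√n`.
-/

lemma norm_cpow_mul_exp_mul_exp_inv_le {z : ℂ} (hz : z.re < 0) (d : ℝ) {a c : ℝ}
    (ha : 0 ≤ a) (hc : 0 ≤ c) :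
    ‖z ^ (d : ℂ) * cexp (a * z) * cexp (c * z⁻¹)‖ ≤ ‖z‖ ^ d := by
  have hz0 : z ≠ 0 := by rintro rfl; simp at hz
  have hexp : Real.exp (a * z.re) ≤ 1 :=
    Real.exp_le_one_iff.mpr (mul_nonpos_of_nonneg_of_nonpos ha hz.le)
  have hexp_inv : Real.exp (c * (z.re / normSq z)) ≤ 1 :=
    Real.exp_le_one_iff.mpr
      (mul_nonpos_of_nonneg_of_nonpos hc (div_nonpos_of_nonpos_of_nonneg hz.le (normSq_nonneg z)))
  rw [norm_mul, norm_mul, norm_cpow_of_ne_zero hz0, norm_exp, norm_exp, re_ofReal_mul,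
    re_ofReal_mul, inv_re]
  simp only [ofReal_re, ofReal_im, mul_zero, Real.exp_zero, div_one]
  calc ‖z‖ ^ d * Real.exp (a * z.re) * Real.exp (c * (z.re / normSq z))
      ≤ ‖z‖ ^ d * 1 * 1 := by gcongr
    _ = ‖z‖ ^ d := by ring

lemma Real.rpow_le_rpow_abs_mul_inv_rpow_abs {r s R : ℝ} (d : ℝ) (hr : 0 < r) (hrs : r ≤ s)
    (hsR : s ≤ R) (hr1 : r ≤ 1) (hR1 : 1 ≤ R) : s ^ d ≤ R ^ |d| * r⁻¹ ^ |d| := by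
  have hR : 1 ≤ R ^ |d| := Real.one_le_rpow hR1 (abs_nonneg d)
  have hr' : 1 ≤ r⁻¹ ^ |d| := Real.one_le_rpow (one_le_inv₀ hr |>.mpr hr1) (abs_nonneg d)
  rcases le_or_gt 0 d with hd | hd
  · calc s ^ d ≤ R ^ |d| := by
          rw [abs_of_nonneg hd]; exact Real.rpow_le_rpow (hr.le.trans hrs) hsR hd
      _ ≤ R ^ |d| * r⁻¹ ^ |d| := le_mul_of_one_le_right (by positivity) hr'
  · calc s ^ d ≤ r⁻¹ ^ |d| := by
          rw [abs_of_neg hd, Real.inv_rpow hr.le, ← Real.rpow_neg hr.le, neg_neg]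
          exact Real.rpow_le_rpow_of_nonpos hr hrs hd.le
      _ ≤ R ^ |d| * r⁻¹ ^ |d| := le_mul_of_one_le_left (by positivity) hR

lemma norm_integral_vertical_segment_le {ρ L : ℝ} (hρ : 0 < ρ) (hρ1 : ρ ≤ 1) (hL : 0 ≤ L)
    (hL1 : L ≤ 1) {s : ℝ} (hs : |s| ≤ 1) (d : ℝ) {a c : ℝ} (ha : 0 ≤ a) (hc : 0 ≤ c) :
    ‖∫ t in (0 : ℝ)..L, (-ρ + I * (s * t)) ^ (d : ℂ) * cexp (a * (-ρ + I * (s * t))) *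
        cexp (c * (-ρ + I * (s * t))⁻¹)‖ ≤ 2 ^ |d| * ρ⁻¹ ^ |d| * L := by
  have hbound : ∀ t ∈ Set.uIoc 0 L, ‖(-ρ + I * (s * t) : ℂ) ^ (d : ℂ) *
      cexp (a * (-ρ + I * (s * t))) * cexp (c * (-ρ + I * (s * t))⁻¹)‖ ≤ 2 ^ |d| * ρ⁻¹ ^ |d| := by
    intro t ht
    rw [Set.uIoc_of_le hL] at ht
    set z : ℂ := -ρ + I * (s * t)
    have hre : z.re = -ρ := by simp [z]
    have him : |z.im| ≤ 1 := by
      have : z.im = s * t := by simp [z]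
      rw [this, abs_mul, abs_of_pos ht.1]
      nlinarith [abs_nonneg s, ht.2]
    have hlower : ρ ≤ ‖z‖ := by simpa [hre, abs_of_pos hρ] using abs_re_le_norm z
    have hupper : ‖z‖ ≤ 2 := by
      have := norm_le_abs_re_add_abs_im z
      rw [hre, abs_neg, abs_of_pos hρ] at this
      linarith
    calc _ ≤ ‖z‖ ^ d := norm_cpow_mul_exp_mul_exp_inv_le (by rw [hre]; linarith) d ha hc
      _ ≤ 2 ^ |d| * ρ⁻¹ ^ |d| :=
        Real.rpow_le_rpow_abs_mul_inv_rpow_abs d hρ hlower hupper hρ1 one_le_two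
  simpa [abs_of_nonneg hL] using intervalIntegral.norm_integral_le_of_norm_le_const hbound

lemma Real.one_div_natSqrt_le_two_div_sqrt {n : ℕ} (hn : 1 ≤ n) :
    1 / (Nat.sqrt n : ℝ) ≤ 2 / √n := by
  have hN : (1 : ℝ) ≤ Nat.sqrt n := by exact_mod_cast Nat.sqrt_pos.mpr hn
  rw [div_le_div_iff₀ (by positivity) (by positivity)]
  linarith [Real.real_sqrt_lt_nat_sqrt_succ (a := n)]

lemma norm_integral_vertical_contour_le {β δ : ℝ} (hβ : 0 ≤ β) (hδ : -2 ≤ δ) (d : ℝ)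
    {n k : ℕ} (hn : 1 ≤ n) (hk : 1 ≤ k) (hkN : k ≤ Nat.sqrt n) {x : ℝ}
    (hx : x ∈ Set.Icc (-1 : ℝ) 1) {s : ℝ} (hs : |s| ≤ 1) :
    (1 / (k : ℝ)) * ‖∫ t : ℝ in (0 : ℝ)..(1 / (Nat.sqrt n : ℝ)),
      (-(k / n : ℝ) + I * (s * t)) ^ (d : ℂ) *
        cexp ((π / k) * (2 * n + δ) * (-(k / n : ℝ) + I * (s * t))) *
        cexp (π * β * (1 - x ^ 2) / (k * (-(k / n : ℝ) + I * (s * t))))‖ ≤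
      2 * 2 ^ |d| * (1 / (k * √n)) * ((n : ℝ) / k) ^ |d| := by
  have hN : (1 : ℝ) ≤ Nat.sqrt n := by exact_mod_cast Nat.sqrt_pos.mpr hn
  have hkn : (k : ℝ) ≤ n := by exact_mod_cast hkN.trans (Nat.sqrt_le_self n)
  have hρ : (0 : ℝ) < k / n := by positivity
  have ha : 0 ≤ π / k * (2 * n + δ) := by
    have : (1 : ℝ) ≤ n := by exact_mod_cast hn
    have : (0 : ℝ) ≤ 2 * n + δ := by linarith
    positivity
  have hc : 0 ≤ π * β * (1 - x ^ 2) / k := by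
    have : 0 ≤ 1 - x ^ 2 := by nlinarith [hx.1, hx.2]
    positivity
  have hseg := norm_integral_vertical_segment_le hρ (div_le_one_of_le₀ hkn (by positivity))
    (by positivity) (div_le_one_of_le₀ hN (by positivity)) hs d ha hc
  rw [inv_div] at hseg
  have hexp : ((π / k) * (2 * n + δ) : ℂ) = ((π / k * (2 * n + δ) : ℝ) : ℂ) := by push_cast; ring
  have hexp_inv : ∀ z : ℂ, (π * β * (1 - x ^ 2) / (k * z) : ℂ) =
      ((π * β * (1 - x ^ 2) / k : ℝ) : ℂ) * z⁻¹ := fun z => by push_cast; ring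
  simp only [hexp, hexp_inv]
  calc _ ≤ 1 / (k : ℝ) * (2 ^ |d| * ((n : ℝ) / k) ^ |d| * (1 / Nat.sqrt n)) := by gcongr
    _ ≤ 1 / (k : ℝ) * (2 ^ |d| * ((n : ℝ) / k) ^ |d| * (2 / √n)) := by
      gcongr _ * (_ * ?_)
      exact Real.one_div_natSqrt_le_two_div_sqrt hn
    _ = _ := by field_simp

theorem vertical_contour_bound_general (β δ : ℝ) (hβ : 0 < β) (hδ : |δ| ≤ 1)
    (d : ℝ) :
    ∃ C > 0, ∀ n : ℕ, 2 ≤ n → ∀ k : ℕ, 1 ≤ k → k ≤ Nat.sqrt n →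
      ∀ x : ℝ, x ∈ Set.Icc (-1 : ℝ) 1 →
        (1 / (k : ℝ)) * ‖(∫ t : ℝ in (0 : ℝ)..(1 / (Nat.sqrt n : ℝ)),
              (-(k / n : ℝ) + I * t) ^ (d : ℂ) *
                Complex.exp ((π / k) * (2 * n + δ) * (-(k / n : ℝ) + I * t)) *
                Complex.exp (π * β * (1 - x ^ 2) / (k * (-(k / n : ℝ) + I * t))))‖ ≤
          C * (1 / (k * Real.sqrt n)) * ((n : ℝ) / k) ^ |d| ∧
        (1 / (k : ℝ)) * ‖(∫ t : ℝ in (0 : ℝ)..(1 / (Nat.sqrt n : ℝ)),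
              (-(k / n : ℝ) - I * t) ^ (d : ℂ) *
                Complex.exp ((π / k) * (2 * n + δ) * (-(k / n : ℝ) - I * t)) *
                Complex.exp (π * β * (1 - x ^ 2) / (k * (-(k / n : ℝ) - I * t))))‖ ≤
          C * (1 / (k * Real.sqrt n)) * ((n : ℝ) / k) ^ |d| := by
  refine ⟨2 * 2 ^ |d|, by positivity, fun n hn k hk hkN x hx => ?_⟩
  have hδ' : -2 ≤ δ := by linarith [neg_abs_le δ]
  have key (s : ℝ) (hs : |s| ≤ 1) :=
    norm_integral_vertical_contour_le hβ.le hδ' d (by omega) hk hkN hx hs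
  exact ⟨by simpa using key 1 (by simp), by simpa [sub_eq_add_neg] using key (-1) (by simp)⟩

/-- Bound for the vertical contour pieces `Γ_v^±` in the contour deformation. -/
theorem vertical_contour_bound (β δ : ℝ) (hβ : 0 < β) (hδ : |δ| ≤ 1)
    (d : ℝ) (hd : ∃ m : ℤ, d = m + 1 / 2) :
    ∃ C > 0, ∀ n : ℕ, 2 ≤ n → ∀ k : ℕ, 1 ≤ k → k ≤ Nat.sqrt n →
      ∀ x : ℝ, x ∈ Set.Icc (-1 : ℝ) 1 →
        (1 / (k : ℝ)) * ‖(∫ t : ℝ in (0 : ℝ)..(1 / (Nat.sqrt n : ℝ)),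
              (-(k / n : ℝ) + I * t) ^ (d : ℂ) *
                Complex.exp ((π / k) * (2 * n + δ) * (-(k / n : ℝ) + I * t)) *
                Complex.exp (π * β * (1 - x ^ 2) / (k * (-(k / n : ℝ) + I * t))))‖ ≤
          C * (1 / (k * Real.sqrt n)) * ((n : ℝ) / k) ^ |d| ∧
        (1 / (k : ℝ)) * ‖(∫ t : ℝ in (0 : ℝ)..(1 / (Nat.sqrt n : ℝ)),
              (-(k / n : ℝ) - I * t) ^ (d : ℂ) *
                Complex.exp ((π / k) * (2 * n + δ) * (-(k / n : ℝ) - I * t)) *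
                Complex.exp (π * β * (1 - x ^ 2) / (k * (-(k / n : ℝ) - I * t))))‖ ≤
          C * (1 / (k * Real.sqrt n)) * ((n : ℝ) / k) ^ |d| :=
  vertical_contour_bound_general β δ hβ hδ d
end

section
/- Let β > 0 and δ be real with |δ| ≤ 1, and let d ∈ 1/2 + ℤ. There is a constant C = C(d,β,δ) > 0 such that for all integers n ≥ 2, N := ⌊√n⌋, all integers k with 1 ≤ k ≤ N, and uniformly for all x ∈ [−1,1]: (1/k)·∫_{−∞}^{−k/n} |s|^d·e^{(πs/k)(2n+δ)}·e^{πβ(1−x²)/(ks)} ds ≤ C·(1/(k√n))·(n/k)^{|d|}. -/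
/-!
After `s = -t`, the factor `exp (π β (1 - x²) / (k s))` is at most `1` on `s < 0`, and since
`2n + δ ≥ n` what remains is dominated by `t ^ d * exp (-b t)` with `b ≥ π q`, `q = n / k`,
integrated over `t > 1 / q`. This tail is at most `Γ(d + 1) / b ^ (d + 1)` when `d ≥ 0` and at
most `q ^ (-d) / b` when `d < 0`; both are `O(q ^ (|d| - 1))`, and `1 / q = k / n ≤ 1 / √n`
because `k ≤ √n`.
-/

open Real MeasureTheory Set

theorem integrableOn_rpow_mul_exp_neg_mul_Ioi {a b : ℝ} (d : ℝ) (ha : 0 < a) (hb : 0 < b) :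
    IntegrableOn (fun t ↦ t ^ d * exp (-(b * t))) (Ioi a) := by
  rcases le_or_gt d 0 with hd | hd
  · refine ((exp_neg_integrableOn_Ioi a hb).const_mul (a ^ d)).mono' ?_ ?_
    · exact (by fun_prop : Measurable fun t : ℝ ↦ t ^ d * exp (-(b * t))).aestronglyMeasurable
    · filter_upwards [ae_restrict_mem measurableSet_Ioi] with t (ht : a < t)
      rw [norm_of_nonneg (by have := ha.trans ht; positivity), neg_mul]
      exact mul_le_mul_of_nonneg_right (rpow_le_rpow_of_nonpos ha ht.le hd) (exp_nonneg _)
  · refine ((integrableOn_rpow_mul_exp_neg_mul_rpow (p := 1) (by linarith) one_pos hb).mono_set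
      (Ioi_subset_Ioi ha.le)).congr_fun (fun t _ ↦ ?_) measurableSet_Ioi
    simp only [rpow_one, neg_mul]

theorem setIntegral_Ioi_rpow_mul_exp_neg_mul_le_Gamma {a b d : ℝ} (ha : 0 ≤ a) (hb : 0 < b)
    (hd : -1 < d) :
    ∫ t in Ioi a, t ^ d * exp (-(b * t)) ≤ (1 / b) ^ (d + 1) * Gamma (d + 1) := by
  have hint : IntegrableOn (fun t ↦ t ^ d * exp (-(b * t))) (Ioi 0) :=
    (integrableOn_rpow_mul_exp_neg_mul_rpow (p := 1) hd one_pos hb).congr_fun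
      (fun t _ ↦ by simp only [rpow_one, neg_mul]) measurableSet_Ioi
  calc ∫ t in Ioi a, t ^ d * exp (-(b * t))
      ≤ ∫ t in Ioi 0, t ^ d * exp (-(b * t)) := by
        refine setIntegral_mono_set hint ?_ (Ioi_subset_Ioi ha).eventuallyLE
        filter_upwards [ae_restrict_mem measurableSet_Ioi] with t (ht : 0 < t)
        positivity
    _ = (1 / b) ^ (d + 1) * Gamma (d + 1) := by
        simpa using integral_rpow_mul_exp_neg_mul_Ioi (a := d + 1) (by linarith) hb

theorem setIntegral_Ioi_rpow_mul_exp_neg_mul_le_of_nonpos {a b d : ℝ} (ha : 0 < a) (hb : 0 < b)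
    (hd : d ≤ 0) :
    ∫ t in Ioi a, t ^ d * exp (-(b * t)) ≤ a ^ d / b := by
  calc ∫ t in Ioi a, t ^ d * exp (-(b * t))
      ≤ ∫ t in Ioi a, a ^ d * exp (-(b * t)) := by
        refine setIntegral_mono_on (integrableOn_rpow_mul_exp_neg_mul_Ioi d ha hb)
          ?_ measurableSet_Ioi fun t (ht : a < t) ↦ ?_
        · have := (exp_neg_integrableOn_Ioi a hb).const_mul (a ^ d)
          simp only [neg_mul] at this
          exact this
        · exact mul_le_mul_of_nonneg_right (rpow_le_rpow_of_nonpos ha ht.le hd) (exp_nonneg _)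
    _ = a ^ d * (exp (-(b * a)) / b) := by
        rw [integral_const_mul]
        congr 1
        simpa [neg_mul, neg_div, div_neg] using integral_exp_mul_Ioi (neg_lt_zero.mpr hb) a
    _ ≤ a ^ d / b := by
        rw [← mul_div_assoc]
        gcongr
        exact mul_le_of_le_one_right (by positivity) (exp_le_one_iff.mpr (by nlinarith))

theorem setIntegral_Ioi_inv_rpow_mul_exp_neg_mul_le {b c d q : ℝ} (hc : 0 < c) (hq : 1 ≤ q)
    (hb : c * q ≤ b) :
    ∫ t in Ioi q⁻¹, t ^ d * exp (-(b * t)) ≤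
      max ((1 / c) ^ (d + 1) * Gamma (d + 1)) (1 / c) * q ^ (|d| - 1) := by
  have hq0 : 0 < q := one_pos.trans_le hq
  have hb0 : 0 < b := (mul_pos hc hq0).trans_le hb
  rcases le_or_gt 0 d with hd | hd
  · calc ∫ t in Ioi q⁻¹, t ^ d * exp (-(b * t))
        ≤ (1 / b) ^ (d + 1) * Gamma (d + 1) :=
          setIntegral_Ioi_rpow_mul_exp_neg_mul_le_Gamma (by positivity) hb0 (by linarith)
      _ ≤ (1 / (c * q)) ^ (d + 1) * Gamma (d + 1) := by gcongr
      _ = (1 / c) ^ (d + 1) * Gamma (d + 1) * q ^ (-(d + 1)) := by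
          rw [one_div (c * q), mul_inv, mul_rpow (by positivity) (by positivity),
            inv_rpow hq0.le, ← rpow_neg hq0.le, ← one_div]
          ring
      _ ≤ (1 / c) ^ (d + 1) * Gamma (d + 1) * q ^ (|d| - 1) := by
          gcongr
          rw [abs_of_nonneg hd]
          linarith
      _ ≤ _ := by gcongr; exact le_max_left _ _
  · calc ∫ t in Ioi q⁻¹, t ^ d * exp (-(b * t))
        ≤ q⁻¹ ^ d / b :=
          setIntegral_Ioi_rpow_mul_exp_neg_mul_le_of_nonpos (inv_pos.mpr hq0) hb0 hd.le
      _ ≤ q ^ (-d) / (c * q) := by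
          rw [inv_rpow hq0.le, ← rpow_neg hq0.le]
          gcongr
      _ = 1 / c * q ^ (|d| - 1) := by
          rw [abs_of_neg hd, rpow_sub_one hq0.ne']
          field_simp
      _ ≤ _ := by gcongr; exact le_max_right _ _

theorem setIntegral_Iic_neg_le {f g : ℝ → ℝ} {a : ℝ} (hg : IntegrableOn g (Ioi a))
    (hf : ∀ t ∈ Ioi a, 0 ≤ f (-t) ∧ f (-t) ≤ g t) :
    ∫ s in Iic (-a), f s ≤ ∫ t in Ioi a, g t := by
  rw [← integral_comp_neg_Ioi]
  refine integral_mono_of_nonneg ?_ hg ?_ <;>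
    filter_upwards [ae_restrict_mem measurableSet_Ioi] with t ht
  exacts [(hf t ht).1, (hf t ht).2]

theorem setIntegral_Iic_neg_inv_rpow_abs_mul_exp_mul_exp_div_le {b c d q w : ℝ} (hc : 0 < c)
    (hq : 1 ≤ q) (hb : c * q ≤ b) (hw : 0 ≤ w) :
    ∫ s in Iic (-q⁻¹), |s| ^ d * exp (b * s) * exp (w / s) ≤
      max ((1 / c) ^ (d + 1) * Gamma (d + 1)) (1 / c) * q ^ (|d| - 1) := by
  have hq0 : 0 < q := one_pos.trans_le hq
  refine (setIntegral_Iic_neg_le (integrableOn_rpow_mul_exp_neg_mul_Ioi d (inv_pos.mpr hq0)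
    ((mul_pos hc hq0).trans_le hb)) fun t ht ↦ ?_).trans
    (setIntegral_Ioi_inv_rpow_mul_exp_neg_mul_le hc hq hb)
  have ht0 : 0 < t := (inv_pos.mpr hq0).trans ht
  rw [abs_neg, abs_of_pos ht0, mul_neg]
  exact ⟨by positivity, mul_le_of_le_one_right (by positivity)
    (exp_le_one_iff.mpr (div_nonpos_of_nonneg_of_nonpos hw (by linarith)))⟩

theorem sqrt_le_div_of_le_nat_sqrt {n k : ℕ} (hk : (0 : ℝ) < k) (hkn : k ≤ Nat.sqrt n) :
    √n ≤ (n : ℝ) / k := by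
  rw [le_div_iff₀ hk]
  calc √n * k ≤ √n * √n := by gcongr; exact (Nat.cast_le.mpr hkn).trans nat_sqrt_le_real_sqrt
    _ = n := mul_self_sqrt n.cast_nonneg

theorem ray_contour_bound_general (β δ : ℝ) (hβ : 0 < β) (hδ : |δ| ≤ 1)
    (d : ℝ) :
    ∃ C > 0, ∀ n : ℕ, 2 ≤ n → ∀ k : ℕ, 1 ≤ k → k ≤ Nat.sqrt n →
      ∀ x : ℝ, x ∈ Set.Icc (-1 : ℝ) 1 →
        (1 / (k : ℝ)) *
            (∫ s : ℝ in Set.Iic (-(k / n : ℝ)),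
              |s| ^ d * Real.exp ((π * s / k) * (2 * n + δ)) *
                Real.exp (π * β * (1 - x ^ 2) / (k * s))) ≤
          C * (1 / (k * Real.sqrt n)) * ((n : ℝ) / k) ^ |d| := by
  set C := max ((1 / π) ^ (d + 1) * Gamma (d + 1)) (1 / π)
  refine ⟨C, (one_div_pos.mpr pi_pos).trans_le (le_max_right _ _), ?_⟩
  intro n hn k hk hkn x hx
  have hk0 : (0 : ℝ) < k := by exact_mod_cast hk
  have hn2 : (2 : ℝ) ≤ n := by exact_mod_cast hn
  have hsqrt := sqrt_le_div_of_le_nat_sqrt hk0 hkn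
  have hq : 1 ≤ (n : ℝ) / k := (one_le_sqrt.mpr (by linarith)).trans hsqrt
  have hb : π * ((n : ℝ) / k) ≤ π * (2 * n + δ) / k := by
    rw [mul_div_assoc]
    gcongr
    linarith [(abs_le.mp hδ).1]
  have hw : 0 ≤ π * β * (1 - x ^ 2) / k := by
    have : 0 ≤ 1 - x ^ 2 := by nlinarith [hx.1, hx.2]
    positivity
  calc 1 / (k : ℝ) * ∫ s in Iic (-(k / n : ℝ)), |s| ^ d * exp ((π * s / k) * (2 * n + δ)) *
          exp (π * β * (1 - x ^ 2) / (k * s))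
      = 1 / k * ∫ s in Iic (-((n : ℝ) / k)⁻¹), |s| ^ d * exp (π * (2 * n + δ) / k * s) *
          exp (π * β * (1 - x ^ 2) / k / s) := by
        rw [inv_div]
        congr 2 with s
        rw [div_div]
        ring_nf
    _ ≤ 1 / k * (C * (n / k : ℝ) ^ (|d| - 1)) := by
        gcongr
        exact setIntegral_Iic_neg_inv_rpow_abs_mul_exp_mul_exp_div_le pi_pos hq hb hw
    _ = C * (1 / (k * (n / k : ℝ))) * (n / k : ℝ) ^ |d| := by
        rw [rpow_sub_one (by positivity)]
        ring
    _ ≤ _ := by gcongr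

/-- Bound for the two rays `Γ_∞^±` along the slit on the negative real axis. -/
theorem ray_contour_bound (β δ : ℝ) (hβ : 0 < β) (hδ : |δ| ≤ 1)
    (d : ℝ) (hd : ∃ m : ℤ, d = m + 1 / 2) :
    ∃ C > 0, ∀ n : ℕ, 2 ≤ n → ∀ k : ℕ, 1 ≤ k → k ≤ Nat.sqrt n →
      ∀ x : ℝ, x ∈ Set.Icc (-1 : ℝ) 1 →
        (1 / (k : ℝ)) *
            (∫ s : ℝ in Set.Iic (-(k / n : ℝ)),
              |s| ^ d * Real.exp ((π * s / k) * (2 * n + δ)) *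
                Real.exp (π * β * (1 - x ^ 2) / (k * s))) ≤
          C * (1 / (k * Real.sqrt n)) * ((n : ℝ) / k) ^ |d| :=
  ray_contour_bound_general β δ hβ hδ d
end

section
/- Let T be an odd integer with 0 < T < 27 and let r ≥ 3 be an integer. There is a constant C = C(r,T) > 0 such that in the circle-method setup, for every A > 0 and every continuous function E on {k/n − ikφ : φ ∈ [−ϑ', ϑ'']} satisfying |E(z)| ≤ A·k^{r/2}·|z|^{−r+1/2}·e^{−(π/k)(9/(4T) − 1/12)·Re(1/z)} for all such z: |∫_{−ϑ'}^{ϑ''} E(z)·e^{2πnz/k} dφ| ≤ C·A·n^{r−1}·k^{−r/2−1/2}. -/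
/-!
On the arc `z = k/n - ikφ` one has `Re z = k/n`, so `|e^{2πnz/k}| = e^{2π}`. Since `Re(1/z) ≥ 0` and
`9/(4T) ≥ 1/12` for `T ≤ 27`, the exponential factor in the bound on `E` is at most `1`, and
`|z| ≥ Re z` bounds `|z|^{-r+1/2}` by `(k/n)^{-r+1/2}`. The integrand is therefore at most
`A e^{2π} k^{r/2} (k/n)^{-r+1/2}` on an arc of length `ϑ' + ϑ'' ≤ 2/(kN) ≤ 4/(k√n)`.
-/

open Complex Real

lemma re_natCast_div_sub_I_mul (k n : ℕ) (φ : ℝ) :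
    ((k : ℂ) / n - I * k * φ).re = k / n := by
  simp [← Complex.ofReal_natCast, ← Complex.ofReal_div]

lemma norm_exp_two_pi_mul_natCast_div_sub_I_mul {k n : ℕ} (hk : k ≠ 0) (hn : n ≠ 0) (φ : ℝ) :
    ‖Complex.exp (2 * π * n * ((k : ℂ) / n - I * k * φ) / k)‖ = Real.exp (2 * π) := by
  have h : 2 * (π : ℂ) * n * ((k : ℂ) / n - I * k * φ) / k =
      ((2 * π : ℝ) : ℂ) - I * (2 * π * n * φ : ℝ) := by
    push_cast
    field_simp
  rw [Complex.norm_exp, h]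
  simp

lemma mul_norm_rpow_mul_exp_le {z : ℂ} (hz : 0 < z.re) {a s b c : ℝ} (ha : 0 ≤ a) (hs : s ≤ 0)
    (hb : 0 ≤ b) (hc : 0 ≤ c) :
    a * ‖z‖ ^ s * Real.exp (-b * c * (1 / z).re) ≤ a * z.re ^ s := by
  have hinv : 0 ≤ (1 / z).re := by
    rw [one_div, Complex.inv_re]
    exact div_nonneg hz.le (Complex.normSq_nonneg z)
  have hexp : Real.exp (-b * c * (1 / z).re) ≤ 1 := by
    rw [Real.exp_le_one_iff, neg_mul, neg_mul, neg_nonpos]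
    positivity
  calc a * ‖z‖ ^ s * Real.exp (-b * c * (1 / z).re) ≤ a * ‖z‖ ^ s :=
        mul_le_of_le_one_right (by positivity) hexp
    _ ≤ a * z.re ^ s :=
        mul_le_mul_of_nonneg_left (Real.rpow_le_rpow_of_nonpos hz (Complex.re_le_norm z) hs) ha

lemma nine_div_four_mul_sub_one_div_twelve_nonneg {t : ℝ} (ht : 0 < t) (ht27 : t ≤ 27) :
    0 ≤ 9 / (4 * t) - 1 / 12 := by
  rw [sub_nonneg, div_le_div_iff₀ (by norm_num) (by positivity)]
  linarith

lemma one_div_mul_nat_sqrt_le {n : ℕ} (hn : n ≠ 0) {k : ℝ} (hk : 0 ≤ k) :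
    1 / (k * Nat.sqrt n) ≤ 2 / (k * √n) := by
  have hN : (1 : ℝ) ≤ Nat.sqrt n := by exact_mod_cast Nat.sqrt_pos.mpr (Nat.pos_of_ne_zero hn)
  have hsqrt : √(n : ℝ) ≤ 2 * Nat.sqrt n := by linarith [Real.real_sqrt_lt_nat_sqrt_succ (a := n)]
  rcases hk.eq_or_lt with rfl | hk
  · simp
  rw [div_le_div_iff₀ (by positivity) (by positivity)]
  nlinarith

lemma rpow_half_mul_div_rpow_div_mul_sqrt {k n : ℝ} (hk : 0 < k) (hn : 0 < n) (r : ℝ) :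
    k ^ (r / 2) * (k / n) ^ (-r + 1 / 2) / (k * √n) = n ^ (r - 1) * k ^ (-r / 2 - 1 / 2) := by
  have hk' : k ^ (-r / 2 - 1 / 2) = k ^ (r / 2) * k ^ (-r + 1 / 2) / k := by
    rw [← Real.rpow_add hk, ← Real.rpow_sub_one hk.ne']
    ring_nf
  have hn' : n ^ (r - 1) = (n ^ (-r + 1 / 2) * √n)⁻¹ := by
    rw [Real.sqrt_eq_rpow, ← Real.rpow_add hn, ← Real.rpow_neg hn.le]
    ring_nf
  rw [Real.div_rpow hk.le hn.le, hk', hn']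
  field_simp

theorem circle_integral_errorH_general (T : ℕ) (hTpos : 0 < T) (hT27 : T < 27)
    (r : ℕ) (hr : 3 ≤ r) :
    ∃ C > 0, ∀ n : ℕ, 2 ≤ n → ∀ k : ℕ, 1 ≤ k → k ≤ Nat.sqrt n →
      ∀ ϑ₁ ϑ₂ : ℝ,
        1 / (2 * k * (Nat.sqrt n : ℝ)) ≤ ϑ₁ → ϑ₁ ≤ 1 / (k * (Nat.sqrt n : ℝ)) →
        1 / (2 * k * (Nat.sqrt n : ℝ)) ≤ ϑ₂ → ϑ₂ ≤ 1 / (k * (Nat.sqrt n : ℝ)) →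
        ∀ A : ℝ, 0 < A → ∀ E : ℂ → ℂ,
          ContinuousOn E ((fun φ : ℝ => (k : ℂ) / n - I * k * φ) '' Set.Icc (-ϑ₁) ϑ₂) →
          (∀ w ∈ (fun φ : ℝ => (k : ℂ) / n - I * k * φ) '' Set.Icc (-ϑ₁) ϑ₂,
            ‖E w‖ ≤
              A * (k : ℝ) ^ ((r : ℝ) / 2) * ‖w‖ ^ (-(r : ℝ) + 1 / 2) *
                Real.exp (-(π / k) * (9 / (4 * T) - 1 / 12) * (1 / w).re)) →
          ‖(∫ φ : ℝ in (-ϑ₁)..ϑ₂,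
                E ((k : ℂ) / n - I * k * φ) *
                  Complex.exp (2 * π * n * ((k : ℂ) / n - I * k * φ) / k))‖ ≤
            C * A * (n : ℝ) ^ (r - 1) * (k : ℝ) ^ (-(r : ℝ) / 2 - 1 / 2) := by
  refine ⟨4 * Real.exp (2 * π), by positivity, ?_⟩
  intro n hn k hk _ ϑ₁ ϑ₂ hϑ₁l hϑ₁u hϑ₂l hϑ₂u A hA E _ hE
  have hn0 : (0 : ℝ) < n := by positivity
  have hk0 : (0 : ℝ) < k := by positivity
  have hϑ₁ : 0 ≤ ϑ₁ := le_trans (by positivity) hϑ₁l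
  have hϑ₂ : 0 ≤ ϑ₂ := le_trans (by positivity) hϑ₂l
  set M := A * (k : ℝ) ^ ((r : ℝ) / 2) * ((k : ℝ) / n) ^ (-(r : ℝ) + 1 / 2) * Real.exp (2 * π)
  have hpt : ∀ φ ∈ Set.uIoc (-ϑ₁) ϑ₂, ‖E ((k : ℂ) / n - I * k * φ) *
      Complex.exp (2 * π * n * ((k : ℂ) / n - I * k * φ) / k)‖ ≤ M := by
    intro φ hφ
    rw [Set.uIoc_of_le (by linarith)] at hφ
    rw [norm_mul, norm_exp_two_pi_mul_natCast_div_sub_I_mul (by omega) (by omega)]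
    refine mul_le_mul_of_nonneg_right ((hE _ ⟨φ, Set.Ioc_subset_Icc_self hφ, rfl⟩).trans ?_)
      (Real.exp_nonneg _)
    rw [← re_natCast_div_sub_I_mul k n φ]
    refine mul_norm_rpow_mul_exp_le ?_ (by positivity) ?_ (by positivity)
      (nine_div_four_mul_sub_one_div_twelve_nonneg (by positivity) (by exact_mod_cast hT27.le))
    · rw [re_natCast_div_sub_I_mul]; positivity
    · have : (3 : ℝ) ≤ r := by exact_mod_cast hr
      linarith
  have hlen : |ϑ₂ - -ϑ₁| ≤ 4 / (k * √n) := by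
    have := one_div_mul_nat_sqrt_le (n := n) (by omega) hk0.le
    rw [abs_of_nonneg (by linarith)]
    linarith [show (4 : ℝ) / (k * √n) = 2 * (2 / (k * √n)) by ring]
  have hr1 : ((r - 1 : ℕ) : ℝ) = r - 1 := by push_cast [show 1 ≤ r by omega]; ring
  calc _ ≤ M * |ϑ₂ - -ϑ₁| := intervalIntegral.norm_integral_le_of_norm_le_const hpt
    _ ≤ M * (4 / (k * √n)) := by gcongr
    _ = 4 * Real.exp (2 * π) * A * ((k : ℝ) ^ ((r : ℝ) / 2) *
          ((k : ℝ) / n) ^ (-(r : ℝ) + 1 / 2) / (k * √n)) := by ring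
    _ = _ := by
      rw [rpow_half_mul_div_rpow_div_mul_sqrt hk0 hn0, ← hr1, Real.rpow_natCast]
      ring

/-- Integrating an error function with the stated pointwise bound over a circle-method
arc against `e^{2πnz/k}` gives `O(A·n^{r−1}·k^{−r/2−1/2})` for `0 < T < 27` odd. -/
theorem circle_integral_errorH (T : ℕ) (hT : Odd T) (hTpos : 0 < T) (hT27 : T < 27)
    (r : ℕ) (hr : 3 ≤ r) :
    ∃ C > 0, ∀ n : ℕ, 2 ≤ n → ∀ k : ℕ, 1 ≤ k → k ≤ Nat.sqrt n →
      ∀ ϑ₁ ϑ₂ : ℝ,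
        1 / (2 * k * (Nat.sqrt n : ℝ)) ≤ ϑ₁ → ϑ₁ ≤ 1 / (k * (Nat.sqrt n : ℝ)) →
        1 / (2 * k * (Nat.sqrt n : ℝ)) ≤ ϑ₂ → ϑ₂ ≤ 1 / (k * (Nat.sqrt n : ℝ)) →
        ∀ A : ℝ, 0 < A → ∀ E : ℂ → ℂ,
          ContinuousOn E ((fun φ : ℝ => (k : ℂ) / n - I * k * φ) '' Set.Icc (-ϑ₁) ϑ₂) →
          (∀ w ∈ (fun φ : ℝ => (k : ℂ) / n - I * k * φ) '' Set.Icc (-ϑ₁) ϑ₂,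
            ‖E w‖ ≤
              A * (k : ℝ) ^ ((r : ℝ) / 2) * ‖w‖ ^ (-(r : ℝ) + 1 / 2) *
                Real.exp (-(π / k) * (9 / (4 * T) - 1 / 12) * (1 / w).re)) →
          ‖(∫ φ : ℝ in (-ϑ₁)..ϑ₂,
                E ((k : ℂ) / n - I * k * φ) *
                  Complex.exp (2 * π * n * ((k : ℂ) / n - I * k * φ) / k))‖ ≤
            C * A * (n : ℝ) ^ (r - 1) * (k : ℝ) ^ (-(r : ℝ) / 2 - 1 / 2) :=
  circle_integral_errorH_general T hTpos hT27 r hr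
end
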